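/- arXiv:2405.03835 — 2 statements merged into one kernel-verified Lean document; each statement's English description precedes it below -/
import Mathlib

section
/- Let S be a semigroup, σ : S → S an involutive automorphism, and z₀ ∈ Z(S) a fixed element. The pairs f, g : S → ℂ with g ≠ 0 satisfying f(x y z₀) + f(σ(y) x z₀) = 2 f(x) g(y) for all x, y ∈ S are exactly the following: (1) f = 0 and g ≠ 0 arbitrary; (2) f = λ₂ m and g = (m(z₀)/2)(m + m*), where m : S → ℂ is multiplicative, λ₂ ∈ ℂ \ {0}, and m(z₀) ≠ 0; (3) f = α₁ χ + β₁ χ* and g = (χ(z₀)/2)(χ + χ*), where χ : S → ℂ is multiplicative, α₁, β₁ ∈ ℂ with (α₁, β₁) ≠ (0, 0), χ ≠ χ*, χ(z₀) = χ*(z₀), and χ(z₀) ≠ 0; (4) f = λ(γ₁ χ + φ) and g = χ(z₀) χ, where χ : S → ℂ is a nonzero multiplicative function, φ is a nonzero solution of the special sine addition law φ(xy) = φ(x)χ(y) + φ(y)χ(x), λ ∈ ℂ \ {0}, γ₁ ∈ ℂ, χ* = χ, φ* = −φ, χ(z₀) ≠ 0, and φ(z₀) = 0. -/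
/-!
Write `T f = f (· * z₀)`. Because `z₀` is central, `T f` solves the same equation as `f`, and
expanding the equation along products of four elements relates `f`, `T f` and `T² f` through
coefficients built from `g`: for `g y₀ ≠ 0`,
`2 g(y₀)³ f = 3 g(y₀) g(y₀²) T f - g(y₀³) T² f`, and `T f * D = f * E` for certain scalars `D`,
`E`. So `T f = c f` unless `g(y₀³) ≠ 0` and every `D` vanishes. In that case `g = ν⁻¹ m` with
`m` multiplicative, the first relation reads `(ν T - 1) (ν T - 2) f = 0`, and the solutions of
`ν T φ = 2 φ` solve a degenerate Wilson equation, hence vanish.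

With `T f = c f` and `c ≠ 0`, the pair `(f, g / c)` solves `w (x y) + w (σ y x) = 2 w x G y`.
For each `x`, the defect `y ↦ w (x y) - w x G y` satisfies the sine addition law with respect
to `G`. If `G` is multiplicative, these defects are multiples of a single sine function `φ`,
which gives `w = γ G + φ`. Otherwise, associativity makes the defect of `G` factor as
`G (y u) - G y G u = κ b y b u` through a sine function `b`. Then `G ± √κ b` are multiplicative,
swapped by `σ`, and `w` is a combination of them. Finally, `T f = c f` and linear independence
give `c = χ z₀`.
-/

section

variable {S : Type*}

section Functions

theorem linearIndependent_pair_iff_apply {P Q : S → ℂ} :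
    LinearIndependent ℂ ![P, Q] ↔ ∀ c d : ℂ, (∀ x, c * P x + d * Q x = 0) → c = 0 ∧ d = 0 := by
  simp only [LinearIndependent.pair_iff, funext_iff, Pi.add_apply, Pi.smul_apply, smul_eq_mul,
    Pi.zero_apply]

theorem exists_eq_mul_of_mul_eq_mul {F f : S → ℂ} {d e : ℂ} (hd : d ≠ 0)
    (h : ∀ x, F x * d = f x * e) : ∃ c, ∀ x, F x = c * f x :=
  ⟨e / d, fun x => by rw [div_mul_eq_mul_div, eq_div_iff hd, h]; ring⟩

theorem LinearIndependent.exists_eq_add_of_forall {P Q w a G b c₁ c₂ : S → ℂ}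
    (hPQ : LinearIndependent ℂ ![P, Q])
    (h : ∀ y x, P y * w x - Q y * a x = c₁ y * G x + c₂ y * b x) :
    ∃ p r : ℂ, ∀ x, w x = p * G x + r * b x := by
  have hPQ' := linearIndependent_pair_iff_apply.mp hPQ
  obtain ⟨y₁, y₂, hdet⟩ : ∃ y₁ y₂, P y₁ * Q y₂ - P y₂ * Q y₁ ≠ 0 := by
    by_contra! hdet
    have hP : ∀ x, -P x = 0 := fun x =>
      (hPQ' (Q x) (-P x) fun y => by linear_combination -hdet x y).2
    exact one_ne_zero (hPQ' 1 0 fun x => by simp [neg_eq_zero.mp (hP x)]).1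
  refine ⟨(Q y₂ * c₁ y₁ - Q y₁ * c₁ y₂) / (P y₁ * Q y₂ - P y₂ * Q y₁),
    (Q y₂ * c₂ y₁ - Q y₁ * c₂ y₂) / (P y₁ * Q y₂ - P y₂ * Q y₁), fun x => ?_⟩
  rw [div_mul_eq_mul_div, div_mul_eq_mul_div, ← add_div, eq_div_iff hdet]
  linear_combination Q y₂ * h y₁ x - Q y₁ * h y₂ x

theorem comp_eq_and_comp_eq_neg {σ : S → S} (hσinv : ∀ x, σ (σ x) = x) {w G a b : S → ℂ}
    (hind : LinearIndependent ℂ ![G, b]) {κ p r : ℂ} (hκ : κ ≠ 0) (hpr : p ≠ 0 ∨ r ≠ 0)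
    (hwpr : ∀ x, w x = p * G x + r * b x) (ha : ∀ x, a x = r * G x + κ * p * b x)
    (h : ∀ y x, G y * w x - b y * a x = w (σ y) * G x + a (σ y) * b x) :
    (∀ y, G (σ y) = G y) ∧ ∀ y, b (σ y) = -b y := by
  have hcoef : ∀ y, p * (G (σ y) - G y) + r * (b (σ y) + b y) = 0 ∧
      r * (G (σ y) - G y) + κ * p * (b (σ y) + b y) = 0 := fun y =>
    linearIndependent_pair_iff_apply.mp hind _ _ fun x => by
      linear_combination -h y x + G y * hwpr x - b y * ha x - G x * hwpr (σ y) - b x * ha (σ y)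
  have key : ∀ y, G (σ y) - G y = 0 ∧ b (σ y) + b y = 0 := fun y => by
    obtain ⟨e₁, e₂⟩ := hcoef y
    obtain ⟨e₃, e₄⟩ := hcoef (σ y)
    rw [hσinv] at e₃ e₄
    have hps : p * (G (σ y) - G y) = 0 := by linear_combination (e₁ - e₃) / 2
    have hrd : r * (b (σ y) + b y) = 0 := by linear_combination (e₁ + e₃) / 2
    have hrs : r * (G (σ y) - G y) = 0 := by linear_combination (e₂ - e₄) / 2
    have hpd : κ * p * (b (σ y) + b y) = 0 := by linear_combination (e₂ + e₄) / 2
    rcases hpr with hp | hr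
    · exact ⟨(mul_eq_zero.mp hps).resolve_left hp,
        (mul_eq_zero.mp hpd).resolve_left (mul_ne_zero hκ hp)⟩
    · exact ⟨(mul_eq_zero.mp hrs).resolve_left hr, (mul_eq_zero.mp hrd).resolve_left hr⟩
  exact ⟨fun y => by linear_combination (key y).1, fun y => by linear_combination (key y).2⟩

end Functions

variable [Semigroup S]

def IsMultiplicative (m : S → ℂ) : Prop :=
  ∀ x y, m (x * y) = m x * m y

def IsSineAddition (φ G : S → ℂ) : Prop :=
  ∀ x y, φ (x * y) = φ x * G y + φ y * G x

def IsWilsonSolution (σ : S → S) (w G : S → ℂ) : Prop :=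
  ∀ x y, w (x * y) + w (σ y * x) = 2 * w x * G y

def IsKannappanWilsonSolution (σ : S → S) (z₀ : S) (f g : S → ℂ) : Prop :=
  ∀ x y, f (x * y * z₀) + f (σ y * x * z₀) = 2 * f x * g y

theorem IsMultiplicative.linearIndependent {χ₁ χ₂ : S → ℂ} (h₁ : IsMultiplicative χ₁)
    (h₂ : IsMultiplicative χ₂) (hne : χ₁ ≠ χ₂) (hχ₁ : χ₁ ≠ 0) (hχ₂ : χ₂ ≠ 0) :
    LinearIndependent ℂ ![χ₁, χ₂] := by
  rw [linearIndependent_pair_iff_apply]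
  intro A B h
  obtain ⟨y, hy⟩ := Function.ne_iff.mp hne
  obtain ⟨x₁, hx₁⟩ : ∃ x, χ₁ x ≠ 0 := Function.ne_iff.mp hχ₁
  obtain ⟨x₂, hx₂⟩ : ∃ x, χ₂ x ≠ 0 := Function.ne_iff.mp hχ₂
  have hB : B = 0 := by
    have e : B * χ₂ x₂ * (χ₂ y - χ₁ y) = 0 := by
      have e := h (x₂ * y)
      rw [h₁, h₂] at e
      linear_combination e - χ₁ y * h x₂
    simpa [hx₂, sub_eq_zero, Ne.symm hy] using e
  have e : A * χ₁ x₁ = 0 := by simpa [hB] using h x₁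
  exact ⟨by simpa [hx₁] using e, hB⟩

section Sine

variable {φ b G : S → ℂ}

theorem IsSineAddition.div_const (h : IsSineAddition φ G) (c : ℂ) :
    IsSineAddition (fun y => φ y / c) G := fun x y => by
  simp only [h x y]; ring

theorem IsSineAddition.mul_defect (h : IsSineAddition φ G) (y u v : S) :
    φ y * (G (u * v) - G u * G v) = φ v * (G (y * u) - G y * G u) := by
  have e := h (y * u) v
  rw [mul_assoc] at e
  linear_combination e - h y (u * v) + G v * h y u - G y * h u v

theorem IsSineAddition.defect_eq (h : IsSineAddition b G) {y₁ : S} (hb : b y₁ = 1) (y u : S) :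
    G (y * u) - G y * G u = (G (y₁ * y₁) - G y₁ * G y₁) * b y * b u := by
  have e₁ := h.mul_defect y u y₁
  have e₂ := h.mul_defect u y₁ y₁
  rw [hb] at e₁ e₂
  linear_combination -e₁ - b y * e₂

theorem IsSineAddition.eq_mul_of_defect_eq (h : IsSineAddition φ G) {κ : ℂ} (hκ : κ ≠ 0)
    {y₁ : S} (hb : b y₁ = 1) (hG : ∀ y u, G (y * u) - G y * G u = κ * b y * b u) (y : S) :
    φ y = φ y₁ * b y := by
  have e := h.mul_defect y y₁ y₁
  rw [hG, hG, hb] at e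
  exact mul_right_cancel₀ hκ (by linear_combination e)

theorem IsSineAddition.linearIndependent (hφ : IsSineAddition φ G) (hG : IsMultiplicative G)
    (hG0 : G ≠ 0) (hφ0 : φ ≠ 0) : LinearIndependent ℂ ![G, φ] := by
  rw [LinearIndependent.pair_iff' hG0]
  rintro a rfl
  apply hφ0
  ext x
  have e := hφ x x
  simp only [Pi.smul_apply, smul_eq_mul, hG x x] at e
  have : (a * G x) ^ 2 = 0 := by linear_combination -a * e
  simpa using this

end Sine

section Wilson

variable {σ : S → S} {w G : S → ℂ}

theorem IsWilsonSolution.isSineAddition_sub (hσmul : ∀ x y, σ (x * y) = σ x * σ y)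
    (hw : IsWilsonSolution σ w G) (x : S) :
    IsSineAddition (fun y => w (x * y) - w x * G y) G := by
  intro y u
  have h₁ := hw x (y * u)
  have h₂ := hw (x * y) u
  have h₃ := hw (σ u * x) y
  simp only [hσmul, ← mul_assoc] at h₁ h₂ h₃ ⊢
  linear_combination (h₁ + h₂ - h₃) / 2 - G y * hw x u

theorem IsWilsonSolution.eq_zero_of_two_mul (hσmul : ∀ x y, σ (x * y) = σ x * σ y)
    (hσinv : ∀ x, σ (σ x) = x) (hw : IsWilsonSolution σ w G) (hG : G ≠ 0)
    (hG2 : ∀ y u, G (y * u) = 2 * G y * G u) : w = 0 := by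
  obtain ⟨x₀, hx₀⟩ : ∃ x, G x ≠ 0 := Function.ne_iff.mp hG
  have hρ : ∀ x y, w (x * y) * G x₀ = w (x * x₀) * G y := fun x y => by
    have e := (hw.isSineAddition_sub hσmul x).mul_defect y x₀ x₀
    simp only [hG2] at e
    exact mul_right_cancel₀ hx₀ (by linear_combination e)
  have hσx₀ : ∀ y, w (σ y * x₀) = 0 := fun y => by
    have e₁ := hw (x₀ * x₀) y
    have e₂ := hρ (x₀ * x₀) y
    have e₃ := hρ x₀ (x₀ * x₀)
    have e₄ := hρ (σ y) (x₀ * x₀)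
    rw [← mul_assoc] at e₃
    rw [hG2] at e₃ e₄
    have : w (σ y * x₀) * (2 * G x₀ ^ 3) = 0 := by
      linear_combination G x₀ ^ 2 * e₁ - G x₀ * e₂ - G y * e₃ - G x₀ * e₄
    simpa [hx₀] using this
  have hprod : ∀ u v, w (u * v) = 0 := fun u v => by
    have h0 : w (u * x₀) = 0 := by simpa only [hσinv] using hσx₀ (σ u)
    exact mul_right_cancel₀ hx₀ (by rw [hρ, h0]; ring)
  funext x
  have := hw x x₀
  rw [hprod, hprod] at this
  simpa [hx₀] using this

theorem IsWilsonSolution.sub_mul_eq (hσmul : ∀ x y, σ (x * y) = σ x * σ y)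
    (hσinv : ∀ x, σ (σ x) = x) (hw : IsWilsonSolution σ w G) (hG : IsMultiplicative G)
    (x y u : S) : (w (y * u) - w y * G u) * G x = G (σ y) * (w (x * u) - w x * G u) := by
  have hshift : ∀ x y u, w (x * y * u) - w (x * y) * G u = G y * (w (x * u) - w x * G u) :=
    fun x y u => by
      have e := hw.isSineAddition_sub hσmul x y u
      simp only [hG y u, ← mul_assoc] at e
      linear_combination e
  have h₁ := hw (x * u) (σ y)
  have h₂ := hw x (σ y)
  have h₃ := hshift x u (σ y)
  have h₄ := hshift (σ (σ y)) x u
  rw [hσinv] at h₁ h₂ h₄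
  simp only [← mul_assoc] at h₁
  linear_combination h₁ - h₃ - h₄ - G u * h₂

theorem IsWilsonSolution.exists_sine_of_isMultiplicative (hσmul : ∀ x y, σ (x * y) = σ x * σ y)
    (hσinv : ∀ x, σ (σ x) = x) (hw : IsWilsonSolution σ w G) (hG : IsMultiplicative G)
    {x₀ : S} (hx₀ : G x₀ ≠ 0) :
    ∃ φ, IsSineAddition φ G ∧ ∀ y u, w (y * u) = w y * G u + G (σ y) * φ u := by
  refine ⟨_, (hw.isSineAddition_sub hσmul x₀).div_const (G x₀), fun y u => ?_⟩
  have e := hw.sub_mul_eq hσmul hσinv hG x₀ y u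
  field_simp
  linear_combination e

theorem IsWilsonSolution.comp_eq_of_isMultiplicative (hσmul : ∀ x y, σ (x * y) = σ x * σ y)
    (hσinv : ∀ x, σ (σ x) = x) (hw : IsWilsonSolution σ w G)
    (hG : IsMultiplicative G) (hw0 : w ≠ 0) (hG0 : G ≠ 0) {φ : S → ℂ} (hφ : IsSineAddition φ G)
    (hwφ : ∀ y u, w (y * u) = w y * G u + G (σ y) * φ u) (x : S) : G (σ x) = G x := by
  obtain ⟨x₀, hx₀⟩ : ∃ x, G x ≠ 0 := Function.ne_iff.mp hG0
  by_cases hφ0 : φ = 0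
  · obtain ⟨y, hy⟩ : ∃ y, w y ≠ 0 := Function.ne_iff.mp hw0
    have hswap : ∀ x y, w (σ y) * G x = w x * G y := fun x y => by
      have := hw x y
      simp only [hwφ, hφ0, Pi.zero_apply, mul_zero, add_zero] at this
      linear_combination this
    have e := hswap x₀ (σ y * x)
    rw [hσmul, hσinv, hwφ, hG, hφ0] at e
    have e' := hswap x₀ (σ y)
    rw [hσinv] at e'
    have : w y * G x₀ * (G (σ x) - G x) = 0 := by
      simp only [Pi.zero_apply, mul_zero, add_zero] at e
      linear_combination e - G x * e'
    simpa [hy, hx₀, sub_eq_zero] using this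
  · -- associativity of `w (σ x₀ * x * u)` forces `G (σ x) = G x` wherever `φ u ≠ 0`
    obtain ⟨u, hu⟩ : ∃ u, φ u ≠ 0 := Function.ne_iff.mp hφ0
    have e₁ := hwφ (σ x₀ * x) u
    have e₂ := hwφ (σ x₀) (x * u)
    rw [hwφ (σ x₀) x, hσmul, hG, hσinv] at e₁
    rw [hφ, hG, hσinv, ← mul_assoc] at e₂
    have : G x₀ * φ u * (G (σ x) - G x) = 0 := by linear_combination e₂ - e₁
    simpa [hu, hx₀, sub_eq_zero] using this

theorem IsWilsonSolution.of_isMultiplicative (hσmul : ∀ x y, σ (x * y) = σ x * σ y)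
    (hσinv : ∀ x, σ (σ x) = x) (hw : IsWilsonSolution σ w G) (hG : IsMultiplicative G)
    (hw0 : w ≠ 0) (hG0 : G ≠ 0) :
    (∀ x, G (σ x) = G x) ∧ ∃ (γ : ℂ) (φ : S → ℂ), IsSineAddition φ G ∧
      (∀ x, φ (σ x) = -φ x) ∧ ∀ x, w x = γ * G x + φ x := by
  obtain ⟨x₀, hx₀⟩ : ∃ x, G x ≠ 0 := Function.ne_iff.mp hG0
  obtain ⟨φ, hφ, hwφ⟩ := hw.exists_sine_of_isMultiplicative hσmul hσinv hG hx₀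
  have hGσ := hw.comp_eq_of_isMultiplicative hσmul hσinv hG hw0 hG0 hφ hwφ
  have hsep : ∀ x y, G y * (w x - φ x) = G x * (φ y + w (σ y)) := fun x y => by
    have := hw x y
    rw [hwφ, hwφ, hσinv, hGσ] at this
    linear_combination -this
  obtain ⟨γ, hγ⟩ : ∃ γ, γ * G x₀ = φ x₀ + w (σ x₀) := ⟨_, div_mul_cancel₀ _ hx₀⟩
  have hwγ : ∀ x, w x = γ * G x + φ x := fun x =>
    mul_right_cancel₀ hx₀ (by linear_combination hsep x x₀ - G x * hγ)
  refine ⟨hGσ, γ, φ, hφ, fun y => ?_, hwγ⟩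
  have : G x₀ * (φ (σ y) + φ y) = 0 := by
    linear_combination -hsep x₀ y + G y * hwγ x₀ - G x₀ * hwγ (σ y) - γ * G x₀ * hGσ y
  simpa [hx₀, add_eq_zero_iff_eq_neg] using this

theorem exists_sub_ne_zero_of_not_isMultiplicative (hG : ¬IsMultiplicative G) (hw0 : w ≠ 0) :
    ∃ x y, w (x * y) - w x * G y ≠ 0 := by
  by_contra! h
  obtain ⟨u, v, huv⟩ : ∃ u v, G (u * v) ≠ G u * G v := by simpa [IsMultiplicative] using hG
  apply hw0
  funext x
  have e := h x (u * v)
  rw [← mul_assoc] at e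
  have : w x * (G (u * v) - G u * G v) = 0 := by
    linear_combination -e + h (x * u) v + G v * h x u
  simpa [sub_eq_zero, huv] using this

theorem exists_sine_decomposition
    (hsine : ∀ x, IsSineAddition (fun y => w (x * y) - w x * G y) G)
    (hG : ¬IsMultiplicative G) (hw0 : w ≠ 0) :
    ∃ (a b : S → ℂ) (κ : ℂ) (y₁ : S), κ ≠ 0 ∧ b y₁ = 1 ∧ IsSineAddition b G ∧
      (∀ y u, G (y * u) - G y * G u = κ * b y * b u) ∧
      ∀ x y, w (x * y) = w x * G y + a x * b y := by
  obtain ⟨x₁, y₁, h₁⟩ := exists_sub_ne_zero_of_not_isMultiplicative hG hw0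
  have hb := (hsine x₁).div_const (w (x₁ * y₁) - w x₁ * G y₁)
  have hb₁ : (w (x₁ * y₁) - w x₁ * G y₁) / (w (x₁ * y₁) - w x₁ * G y₁) = 1 := div_self h₁
  have hdefect := hb.defect_eq hb₁
  have hκ : G (y₁ * y₁) - G y₁ * G y₁ ≠ 0 := fun h0 =>
    hG fun y u => by
      have := hdefect y u
      rw [h0] at this
      linear_combination this
  refine ⟨fun x => w (x * y₁) - w x * G y₁, _, _, y₁, hκ, hb₁, hb, hdefect, fun x y => ?_⟩
  linear_combination (hsine x).eq_mul_of_defect_eq hκ hb₁ hdefect y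

theorem exists_isMultiplicative_of_sine {b : S → ℂ} {κ p r : ℂ} (hκ : κ ≠ 0)
    (hb : IsSineAddition b G) (hb0 : b ≠ 0) (hG : ∀ y u, G (y * u) - G y * G u = κ * b y * b u)
    (hGσ : ∀ y, G (σ y) = G y) (hbσ : ∀ y, b (σ y) = -b y)
    (hwpr : ∀ x, w x = p * G x + r * b x) :
    ∃ (χ : S → ℂ) (α β : ℂ), IsMultiplicative χ ∧ χ ≠ (fun x => χ (σ x)) ∧
      (∀ x, w x = α * χ x + β * χ (σ x)) ∧ ∀ x, G x = (χ x + χ (σ x)) / 2 := by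
  obtain ⟨t, ht⟩ := IsAlgClosed.exists_eq_mul_self κ
  have ht0 : t ≠ 0 := by rintro rfl; exact hκ (by simpa using ht)
  have hχσ : ∀ x, G (σ x) + t * b (σ x) = G x - t * b x := fun x => by rw [hGσ, hbσ]; ring
  refine ⟨fun x => G x + t * b x, p / 2 + r / (2 * t), p / 2 - r / (2 * t),
    fun x y => ?_, fun h => ?_, fun x => ?_, fun x => ?_⟩
  · linear_combination hG x y + t * hb x y + b x * b y * ht
  · obtain ⟨y, hy⟩ : ∃ y, b y ≠ 0 := Function.ne_iff.mp hb0
    have e := congrFun h y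
    simp only [hχσ] at e
    have : 2 * t * b y = 0 := by linear_combination e
    simp_all
  · simp only [hχσ, hwpr]
    field_simp
    ring
  · simp only [hχσ]
    ring

theorem IsWilsonSolution.of_not_isMultiplicative (hσmul : ∀ x y, σ (x * y) = σ x * σ y)
    (hσinv : ∀ x, σ (σ x) = x) (hw : IsWilsonSolution σ w G) (hG : ¬IsMultiplicative G)
    (hw0 : w ≠ 0) (hG0 : G ≠ 0) :
    ∃ (χ : S → ℂ) (α β : ℂ), IsMultiplicative χ ∧ χ ≠ (fun x => χ (σ x)) ∧
      (∀ x, w x = α * χ x + β * χ (σ x)) ∧ ∀ x, G x = (χ x + χ (σ x)) / 2 := by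
  obtain ⟨a, b, κ, y₁, hκ, hb₁, hb, hdefect, hwab⟩ :=
    exists_sine_decomposition (hw.isSineAddition_sub hσmul) hG hw0
  have hb0 : b ≠ 0 := fun h0 => by simp [h0] at hb₁
  have hσ : ∀ y x, G y * w x - b y * a x = w (σ y) * G x + a (σ y) * b x := fun y x => by
    have := hw x y
    rw [hwab, hwab] at this
    linear_combination -this
  -- if `b` were a multiple of `G`, then `G (y * u) = 2 * G y * G u`, which kills `w`
  have hind : LinearIndependent ℂ ![G, b] := by
    rw [LinearIndependent.pair_iff' hG0]
    rintro l rfl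
    have hl : l ≠ 0 := by rintro rfl; simp at hb₁
    refine hw0 (hw.eq_zero_of_two_mul hσmul hσinv hG0 fun y u => mul_left_cancel₀ hl ?_)
    have := hb y u
    simp only [Pi.smul_apply, smul_eq_mul] at this
    linear_combination this
  obtain ⟨p, r, hwpr⟩ := hind.exists_eq_add_of_forall hσ
  have ha : ∀ x, a x = r * G x + κ * p * b x := fun x => by
    have e := hwab x y₁
    rw [hb₁, hwpr, hwpr, hb, hb₁] at e
    linear_combination -e + p * hdefect x y₁ + p * κ * b x * hb₁
  have hpr : p ≠ 0 ∨ r ≠ 0 := by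
    by_contra! h
    exact hw0 (funext fun x => by simp [hwpr x, h.1, h.2])
  obtain ⟨hGσ, hbσ⟩ := comp_eq_and_comp_eq_neg hσinv hind hκ hpr hwpr ha hσ
  exact exists_isMultiplicative_of_sine hκ hb hb0 hdefect hGσ hbσ hwpr

theorem IsWilsonSolution.classification (hσmul : ∀ x y, σ (x * y) = σ x * σ y)
    (hσinv : ∀ x, σ (σ x) = x) (hw : IsWilsonSolution σ w G) (hw0 : w ≠ 0) (hG0 : G ≠ 0) :
    (IsMultiplicative G ∧ (∀ x, G (σ x) = G x) ∧ ∃ (γ : ℂ) (φ : S → ℂ), IsSineAddition φ G ∧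
      (∀ x, φ (σ x) = -φ x) ∧ ∀ x, w x = γ * G x + φ x) ∨
    ∃ (χ : S → ℂ) (α β : ℂ), IsMultiplicative χ ∧ χ ≠ (fun x => χ (σ x)) ∧
      (∀ x, w x = α * χ x + β * χ (σ x)) ∧ ∀ x, G x = (χ x + χ (σ x)) / 2 := by
  by_cases hG : IsMultiplicative G
  · exact Or.inl ⟨hG, hw.of_isMultiplicative hσmul hσinv hG hw0 hG0⟩
  · exact Or.inr (hw.of_not_isMultiplicative hσmul hσinv hG hw0 hG0)

end Wilson

namespace IsKannappanWilsonSolution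

variable {σ : S → S} {z₀ : S} {f g φ : S → ℂ}

theorem mul_right (hz₀ : ∀ x, x * z₀ = z₀ * x) (h : IsKannappanWilsonSolution σ z₀ φ g) :
    IsKannappanWilsonSolution σ z₀ (fun x => φ (x * z₀)) g := fun x y => by
  have := h (x * z₀) y
  rw [mul_assoc x z₀ y, ← hz₀ y, ← mul_assoc x y z₀] at this
  simpa only [← mul_assoc] using this

theorem expand (hσmul : ∀ x y, σ (x * y) = σ x * σ y) (h : IsKannappanWilsonSolution σ z₀ φ g)
    (x u v : S) :
    φ (x * u * v * z₀) = φ (x * u) * g v - φ (σ v * x) * g u + φ x * g (u * v) := by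
  have h₁ := h x (u * v)
  have h₂ := h (x * u) v
  have h₃ := h (σ v * x) u
  simp only [hσmul, ← mul_assoc] at h₁ h₂ h₃
  linear_combination (h₁ + h₂ - h₃) / 2

theorem expand_mul_right (hσmul : ∀ x y, σ (x * y) = σ x * σ y) (hz₀ : ∀ x, x * z₀ = z₀ * x)
    (h : IsKannappanWilsonSolution σ z₀ φ g) (x u v : S) :
    φ (x * u * v * z₀ * z₀) = φ (x * u * z₀) * g v + φ (x * v * z₀) * g u +
      φ (x * z₀) * g (u * v) - 2 * φ x * g u * g v := by
  linear_combination (h.mul_right hz₀).expand hσmul x u v - g u * h x v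

/-- Eliminating the values at `z₀ ^ 2` and `z₀` from the expansions of `φ (x y u v z₀ ^ 2)`
leaves a relation between `x ↦ φ (x z₀)`, `φ` and the non-shifted sum `φ (x u) + φ (σ u x)`. -/
theorem mul_right_relation (hσmul : ∀ x y, σ (x * y) = σ x * σ y) (hz₀ : ∀ x, x * z₀ = z₀ * x)
    (h : IsKannappanWilsonSolution σ z₀ φ g) (x y u v : S) :
    φ (x * z₀) * g (y * u * v) + (φ (x * u) + φ (σ u * x)) * g y * g v =
      φ x * (g y * g (u * v) + g (y * u) * g v + g (y * v) * g u) := by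
  have q₁ := h.expand_mul_right hσmul hz₀ x y (u * v)
  have q₂ := h.expand_mul_right hσmul hz₀ (x * y) u v
  simp only [← mul_assoc] at q₁ q₂
  linear_combination -q₁ + q₂ - g y * h.expand hσmul x u v + g v * h.expand hσmul x y u +
    g u * h.expand hσmul x y v

theorem quadratic_mul_right (hσmul : ∀ x y, σ (x * y) = σ x * σ y) (hz₀ : ∀ x, x * z₀ = z₀ * x)
    (h : IsKannappanWilsonSolution σ z₀ φ g) (y₀ x : S) :
    2 * g y₀ ^ 3 * φ x =
      3 * g y₀ * g (y₀ * y₀) * φ (x * z₀) - g (y₀ * y₀ * y₀) * φ (x * z₀ * z₀) := by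
  have e := h.mul_right_relation hσmul hz₀ (x * z₀) y₀ y₀ y₀
  rw [mul_assoc x z₀ y₀, ← hz₀ y₀, ← mul_assoc x y₀ z₀, ← mul_assoc (σ y₀) x z₀] at e
  linear_combination e - g y₀ ^ 2 * h x y₀

theorem mul_right_mul_defect (hσmul : ∀ x y, σ (x * y) = σ x * σ y)
    (hz₀ : ∀ x, x * z₀ = z₀ * x) (h : IsKannappanWilsonSolution σ z₀ φ g) (y₀ y u v x : S) :
    φ (x * z₀) * (g (y * u * v) * g y₀ ^ 2 - g (y₀ * u * y₀) * g y * g v) =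
      φ x * ((g y * g (u * v) + g (y * u) * g v + g (y * v) * g u) * g y₀ ^ 2 -
        (g y₀ * g (u * y₀) + g (y₀ * u) * g y₀ + g (y₀ * y₀) * g u) * g y * g v) := by
  linear_combination g y₀ ^ 2 * h.mul_right_relation hσmul hz₀ x y u v -
    g y * g v * h.mul_right_relation hσmul hz₀ x y₀ u y₀

theorem exists_mul_right_eq_of_cube_eq_zero (hσmul : ∀ x y, σ (x * y) = σ x * σ y)
    (hz₀ : ∀ x, x * z₀ = z₀ * x) (h : IsKannappanWilsonSolution σ z₀ f g) (hf : f ≠ 0)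
    {y₀ : S} (hy₀ : g y₀ ≠ 0) (h₃ : g (y₀ * y₀ * y₀) = 0) :
    ∃ c, ∀ x, f (x * z₀) = c * f x := by
  have e := h.quadratic_mul_right hσmul hz₀ y₀
  simp only [h₃, zero_mul, sub_zero] at e
  have h₂ : g (y₀ * y₀) ≠ 0 := fun h₂ => hf (funext fun x => by simpa [h₂, hy₀] using e x)
  exact exists_eq_mul_of_mul_eq_mul (e := 2 * g y₀ ^ 3)
    (by simp [h₂, hy₀] : 3 * g y₀ * g (y₀ * y₀) ≠ 0) fun x => by linear_combination -e x

theorem eq_zero_of_mul_right_eq (hσmul : ∀ x y, σ (x * y) = σ x * σ y)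
    (hσinv : ∀ x, σ (σ x) = x) (h : IsKannappanWilsonSolution σ z₀ φ g) (hg : g ≠ 0) {ν : ℂ}
    (hν : ν ≠ 0) (hgν : ∀ y v, g (y * v) = ν * g y * g v)
    (hφ : ∀ x, ν * φ (x * z₀) = 2 * φ x) : φ = 0 := by
  have hW : IsWilsonSolution σ φ (fun y => ν * g y / 2) := fun x y => by
    linear_combination (ν * h x y - hφ (x * y) - hφ (σ y * x)) / 2
  refine hW.eq_zero_of_two_mul hσmul hσinv (fun h0 => hg (funext fun y => ?_)) fun y u => ?_
  · simpa [hν] using congrFun h0 y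
  · simp only [hgν]
    ring

theorem exists_mul_right_eq_of_mul_eq (hσmul : ∀ x y, σ (x * y) = σ x * σ y)
    (hσinv : ∀ x, σ (σ x) = x) (hz₀ : ∀ x, x * z₀ = z₀ * x)
    (h : IsKannappanWilsonSolution σ z₀ f g) (hg : g ≠ 0) {y₀ : S} (hy₀ : g y₀ ≠ 0) {ν : ℂ}
    (hν : ν ≠ 0) (hgν : ∀ y v, g (y * v) = ν * g y * g v) :
    ∃ c, ∀ x, f (x * z₀) = c * f x := by
  have hquad : ∀ x, 2 * f x = 3 * ν * f (x * z₀) - ν ^ 2 * f (x * z₀ * z₀) := fun x => by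
    have e := h.quadratic_mul_right hσmul hz₀ y₀ x
    simp only [hgν] at e
    exact mul_left_cancel₀ (pow_ne_zero 3 hy₀) (by linear_combination e)
  have h₂ : IsKannappanWilsonSolution σ z₀ (fun x => ν * f (x * z₀) - f x) g := fun x y => by
    linear_combination ν * h.mul_right hz₀ x y - h x y
  have hf₂ := h₂.eq_zero_of_mul_right_eq hσmul hσinv hg hν hgν fun x => by
    linear_combination hquad x
  refine exists_eq_mul_of_mul_eq_mul (e := 1) hν fun x => ?_
  have e := congrFun hf₂ x
  simp only [Pi.zero_apply] at e
  linear_combination e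

theorem exists_mul_eq_of_triple_eq {y₀ : S} (hy₀ : g y₀ ≠ 0) (h₃ : g (y₀ * y₀ * y₀) ≠ 0)
    (hD : ∀ y u v, g (y * u * v) * g y₀ ^ 2 = g (y₀ * u * y₀) * g y * g v) :
    ∃ ν ≠ 0, ∀ y v, g (y * v) = ν * g y * g v := by
  have hright : ∀ y v, g (y₀ * y₀ * y₀) * g (y * v) * g y₀ =
      g (y₀ * v * y₀) * g y * g (y₀ * y₀) := fun y v => by
    have e := hD y v (y₀ * y₀)
    rw [← mul_assoc] at e
    linear_combination e - hD (y * v) y₀ y₀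
  have hleft : ∀ y v, g (y₀ * y₀ * y₀) * g y₀ * g (y * v) =
      g (y₀ * y * y₀) * g (y₀ * y₀) * g v := fun y v => by
    have e := hD y₀ y₀ (y * v)
    rw [← mul_assoc] at e
    linear_combination hD (y₀ * y₀) y v - e
  have h₂ : g (y₀ * y₀) ≠ 0 := by
    intro h₂
    have e := hright y₀ (y₀ * y₀)
    rw [h₂, ← mul_assoc] at e
    simp_all
  have hmid : ∀ v, g (y₀ * v * y₀) * g y₀ = g (y₀ * y₀ * y₀) * g v := fun v =>
    mul_right_cancel₀ h₂ (by linear_combination hleft y₀ v - hright y₀ v)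
  refine ⟨g (y₀ * y₀) / g y₀ ^ 2, div_ne_zero h₂ (pow_ne_zero 2 hy₀), fun y v => ?_⟩
  field_simp
  exact mul_left_cancel₀ h₃ (by linear_combination g y₀ * hright y v + g y * g (y₀ * y₀) * hmid v)

theorem exists_mul_right_eq (hσmul : ∀ x y, σ (x * y) = σ x * σ y) (hσinv : ∀ x, σ (σ x) = x)
    (hz₀ : ∀ x, x * z₀ = z₀ * x) (h : IsKannappanWilsonSolution σ z₀ f g) (hf : f ≠ 0)
    (hg : g ≠ 0) : ∃ c ≠ 0, ∀ x, f (x * z₀) = c * f x := by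
  obtain ⟨y₀, hy₀⟩ : ∃ y, g y ≠ 0 := Function.ne_iff.mp hg
  suffices ∃ c, ∀ x, f (x * z₀) = c * f x by
    obtain ⟨c, hc⟩ := this
    refine ⟨c, fun hc0 => hf (funext fun x => ?_), hc⟩
    have := h x y₀
    simp only [hc, hc0, zero_mul, add_zero] at this
    simpa [hy₀] using this
  by_cases h₃ : g (y₀ * y₀ * y₀) = 0
  · exact h.exists_mul_right_eq_of_cube_eq_zero hσmul hz₀ hf hy₀ h₃
  by_cases hD : ∀ y u v, g (y * u * v) * g y₀ ^ 2 = g (y₀ * u * y₀) * g y * g v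
  · obtain ⟨ν, hν, hgν⟩ := exists_mul_eq_of_triple_eq hy₀ h₃ hD
    exact h.exists_mul_right_eq_of_mul_eq hσmul hσinv hz₀ hg hy₀ hν hgν
  · push Not at hD
    obtain ⟨y, u, v, hD⟩ := hD
    exact exists_eq_mul_of_mul_eq_mul (sub_ne_zero.mpr hD)
      (h.mul_right_mul_defect hσmul hz₀ y₀ y u v)

theorem isWilsonSolution_div (h : IsKannappanWilsonSolution σ z₀ f g) {c : ℂ} (hc : c ≠ 0)
    (hfc : ∀ x, f (x * z₀) = c * f x) : IsWilsonSolution σ f (fun y => g y / c) := fun x y => by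
  have := h x y
  rw [hfc, hfc] at this
  field_simp
  linear_combination this

end IsKannappanWilsonSolution

namespace KannappanWilson

variable {σ : S → S} {z₀ : S} {f g : S → ℂ}

def OneCharacterForm (σ : S → S) (z₀ : S) (f g : S → ℂ) : Prop :=
  ∃ (m : S → ℂ) (lam₂ : ℂ),
    (∀ x y : S, m (x * y) = m x * m y) ∧ lam₂ ≠ 0 ∧ m z₀ ≠ 0 ∧
    (∀ x : S, f x = lam₂ * m x) ∧
    (∀ x : S, g x = (m z₀ / 2) * (m x + m (σ x)))

def TwoCharacterForm (σ : S → S) (z₀ : S) (f g : S → ℂ) : Prop :=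
  ∃ (χ : S → ℂ) (α₁ β₁ : ℂ),
    (∀ x y : S, χ (x * y) = χ x * χ y) ∧ (α₁, β₁) ≠ (0, 0) ∧
    χ ≠ (fun x => χ (σ x)) ∧ χ z₀ = χ (σ z₀) ∧ χ z₀ ≠ 0 ∧
    (∀ x : S, f x = α₁ * χ x + β₁ * χ (σ x)) ∧
    (∀ x : S, g x = (χ z₀ / 2) * (χ x + χ (σ x)))

def SineForm (σ : S → S) (z₀ : S) (f g : S → ℂ) : Prop :=
  ∃ (χ φ : S → ℂ) (lam γ₁ : ℂ),
    (∀ x y : S, χ (x * y) = χ x * χ y) ∧ χ ≠ 0 ∧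
    φ ≠ 0 ∧ (∀ x y : S, φ (x * y) = φ x * χ y + φ y * χ x) ∧
    lam ≠ 0 ∧
    (∀ x : S, χ (σ x) = χ x) ∧ (∀ x : S, φ (σ x) = -φ x) ∧
    χ z₀ ≠ 0 ∧ φ z₀ = 0 ∧
    (∀ x : S, f x = lam * (γ₁ * χ x + φ x)) ∧
    (∀ x : S, g x = χ z₀ * χ x)

theorem oneCharacterForm_or_sineForm (hf : f ≠ 0) {c : ℂ} (hc : c ≠ 0)
    (hfc : ∀ x, f (x * z₀) = c * f x) {χ φ : S → ℂ} {γ : ℂ} (hχ : IsMultiplicative χ)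
    (hχ0 : χ ≠ 0) (hχσ : ∀ x, χ (σ x) = χ x) (hφ : IsSineAddition φ χ)
    (hφσ : ∀ x, φ (σ x) = -φ x) (hfχ : ∀ x, f x = γ * χ x + φ x) (hgχ : ∀ x, g x = c * χ x) :
    OneCharacterForm σ z₀ f g ∨ SineForm σ z₀ f g := by
  have hlin : ∀ x, (γ * χ z₀ + φ z₀ - c * γ) * χ x + (χ z₀ - c) * φ x = 0 := fun x => by
    have := hfc x
    rw [hfχ, hfχ, hχ, hφ] at this
    linear_combination this
  by_cases hφ0 : φ = 0
  · subst hφ0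
    have hγ : γ ≠ 0 := by
      rintro rfl
      exact hf (funext fun x => by simp [hfχ])
    obtain ⟨x₁, hx₁⟩ : ∃ x, χ x ≠ 0 := Function.ne_iff.mp hχ0
    have hz : χ z₀ = c := by
      have e := hlin x₁
      simp only [Pi.zero_apply, add_zero, mul_zero] at e
      have : γ * χ x₁ * (χ z₀ - c) = 0 := by linear_combination e
      simpa [hγ, hx₁, sub_eq_zero] using this
    refine Or.inl ⟨χ, γ, hχ, hγ, hz ▸ hc, fun x => by simp [hfχ], fun x => ?_⟩
    rw [hgχ, hχσ, hz]
    ring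
  · obtain ⟨h₁, h₂⟩ := linearIndependent_pair_iff_apply.mp
      (hφ.linearIndependent hχ hχ0 hφ0) _ _ hlin
    have hz : χ z₀ = c := by linear_combination h₂
    have hφz : φ z₀ = 0 := by
      rw [hz] at h₁
      linear_combination h₁
    exact Or.inr ⟨χ, φ, 1, γ, hχ, hχ0, hφ0, hφ, one_ne_zero, hχσ, hφσ, hz ▸ hc, hφz,
      fun x => by rw [hfχ]; ring, fun x => by rw [hgχ, hz]⟩

theorem oneCharacterForm_or_twoCharacterForm (hσmul : ∀ x y, σ (x * y) = σ x * σ y)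
    (hσinv : ∀ x, σ (σ x) = x) (hf : f ≠ 0) {c : ℂ} (hc : c ≠ 0)
    (hfc : ∀ x, f (x * z₀) = c * f x) {χ : S → ℂ} {α β : ℂ} (hχ : IsMultiplicative χ)
    (hχσ : χ ≠ fun x => χ (σ x)) (hfχ : ∀ x, f x = α * χ x + β * χ (σ x))
    (hgχ : ∀ x, g x = c / 2 * (χ x + χ (σ x))) :
    OneCharacterForm σ z₀ f g ∨ TwoCharacterForm σ z₀ f g := by
  have hχ' : IsMultiplicative fun x => χ (σ x) := fun x y => by simp only [hσmul, hχ _ _]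
  have hχ0 : χ ≠ 0 := fun h0 => hχσ (by simp [h0]; rfl)
  have hχ'0 : (fun x => χ (σ x)) ≠ 0 := fun h0 =>
    hχ0 (funext fun x => by simpa [hσinv] using congrFun h0 (σ x))
  have hlin : ∀ x, α * (χ z₀ - c) * χ x + β * (χ (σ z₀) - c) * χ (σ x) = 0 := fun x => by
    have := hfc x
    rw [hfχ, hfχ, hχ, hσmul, hχ] at this
    linear_combination this
  obtain ⟨h₁, h₂⟩ := linearIndependent_pair_iff_apply.mp
    (hχ.linearIndependent hχ' hχσ hχ0 hχ'0) _ _ hlin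
  by_cases hα : α = 0
  · have hβ : β ≠ 0 := by
      rintro rfl
      exact hf (funext fun x => by simp [hfχ, hα])
    have hz : χ (σ z₀) = c := by simpa [hβ, sub_eq_zero] using h₂
    refine Or.inl ⟨fun x => χ (σ x), β, hχ', hβ, ?_, fun x => by rw [hfχ, hα]; ring,
      fun x => ?_⟩
    · simpa [hz] using hc
    · simp only [hgχ, hσinv, hz]
      ring
  have hz : χ z₀ = c := by simpa [hα, sub_eq_zero] using h₁
  by_cases hβ : β = 0
  · exact Or.inl ⟨χ, α, hχ, hα, hz ▸ hc, fun x => by rw [hfχ, hβ]; ring,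
      fun x => by rw [hgχ, hz]⟩
  · have hz' : χ (σ z₀) = c := by simpa [hβ, sub_eq_zero] using h₂
    exact Or.inr ⟨χ, α, β, hχ, by simp [hα], hχσ, hz.trans hz'.symm, hz ▸ hc, hfχ,
      fun x => by rw [hgχ, hz]⟩

theorem isKannappanWilsonSolution_of_forms (hσmul : ∀ x y, σ (x * y) = σ x * σ y)
    (hσinv : ∀ x, σ (σ x) = x) :
    f = 0 ∨ OneCharacterForm σ z₀ f g ∨ TwoCharacterForm σ z₀ f g ∨ SineForm σ z₀ f g →
      IsKannappanWilsonSolution σ z₀ f g := by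
  rintro (rfl | ⟨m, lam, hm, -, -, hf, hg⟩ | ⟨χ, α, β, hχ, -, -, hzσ, -, hf, hg⟩ |
      ⟨χ, φ, lam, γ, hχ, -, -, hφ, -, hχσ, hφσ, -, hφz, hf, hg⟩) x y
  · simp
  · simp only [hf, hg, hm]
    ring
  · simp only [hf, hg, hσmul, hσinv, hχ, ← hzσ]
    ring
  · simp only [hf, hg, hχ, hφ, hχσ, hφσ, hφz]
    ring

end KannappanWilson

end

/-- Description of the solutions `(f, g)` with `g ≠ 0` of the Kannappan–Wilson
functional equation `f(x y z₀) + f(σ(y) x z₀) = 2 f(x) g(y)` on a semigroup,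
where `z₀` is a fixed central element. -/
theorem kannappan_wilson_dirac_solutions {S : Type*} [Semigroup S] (σ : S → S)
    (hσmul : ∀ x y : S, σ (x * y) = σ x * σ y) (hσinv : ∀ x : S, σ (σ x) = x)
    (z₀ : S) (hz₀ : ∀ x : S, x * z₀ = z₀ * x)
    (f g : S → ℂ) (hg : g ≠ 0) :
    (∀ x y : S, f (x * y * z₀) + f (σ y * x * z₀) = 2 * f x * g y) ↔
      (f = 0) ∨
      (∃ (m : S → ℂ) (lam₂ : ℂ),
        (∀ x y : S, m (x * y) = m x * m y) ∧ lam₂ ≠ 0 ∧ m z₀ ≠ 0 ∧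
        (∀ x : S, f x = lam₂ * m x) ∧
        (∀ x : S, g x = (m z₀ / 2) * (m x + m (σ x)))) ∨
      (∃ (χ : S → ℂ) (α₁ β₁ : ℂ),
        (∀ x y : S, χ (x * y) = χ x * χ y) ∧ (α₁, β₁) ≠ (0, 0) ∧
        χ ≠ (fun x => χ (σ x)) ∧ χ z₀ = χ (σ z₀) ∧ χ z₀ ≠ 0 ∧
        (∀ x : S, f x = α₁ * χ x + β₁ * χ (σ x)) ∧
        (∀ x : S, g x = (χ z₀ / 2) * (χ x + χ (σ x)))) ∨
      (∃ (χ φ : S → ℂ) (lam γ₁ : ℂ),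
        (∀ x y : S, χ (x * y) = χ x * χ y) ∧ χ ≠ 0 ∧
        φ ≠ 0 ∧ (∀ x y : S, φ (x * y) = φ x * χ y + φ y * χ x) ∧
        lam ≠ 0 ∧
        (∀ x : S, χ (σ x) = χ x) ∧ (∀ x : S, φ (σ x) = -φ x) ∧
        χ z₀ ≠ 0 ∧ φ z₀ = 0 ∧
        (∀ x : S, f x = lam * (γ₁ * χ x + φ x)) ∧
        (∀ x : S, g x = χ z₀ * χ x)) := by
  refine ⟨fun hE => ?_, KannappanWilson.isKannappanWilsonSolution_of_forms hσmul hσinv⟩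
  by_cases hf : f = 0
  · exact Or.inl hf
  obtain ⟨c, hc, hfc⟩ :=
    IsKannappanWilsonSolution.exists_mul_right_eq hσmul hσinv hz₀ hE hf hg
  have hG : (fun y => g y / c) ≠ 0 := fun h0 =>
    hg (funext fun y => by simpa [hc] using congrFun h0 y)
  rcases (IsKannappanWilsonSolution.isWilsonSolution_div hE hc hfc).classification hσmul hσinv
      hf hG with ⟨hGm, hGσ, γ, φ, hφ, hφσ, hfφ⟩ | ⟨χ, α, β, hχ, hχσ, hfχ, hgχ⟩
  · rcases KannappanWilson.oneCharacterForm_or_sineForm (g := g) hf hc hfc hGm hG hGσ hφ hφσ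
      hfφ (fun x => by field_simp) with h | h
    · exact Or.inr (Or.inl h)
    · exact Or.inr (Or.inr (Or.inr h))
  · rcases KannappanWilson.oneCharacterForm_or_twoCharacterForm (g := g) hσmul hσinv hf hc hfc
      hχ hχσ hfχ (fun x => by rw [← div_mul_cancel₀ (g x) hc, hgχ]; ring) with h | h
    · exact Or.inr (Or.inl h)
    · exact Or.inr (Or.inr (Or.inl h))
end

section
/- Let S be a semigroup, σ : S → S an involutive automorphism, and μ a finite linear combination of Dirac measures at central points, given by a finite index set I, constants c_i ∈ ℂ, and elements z_i ∈ Z(S). Suppose f, g : S → ℂ satisfy ∑_{i∈I} c_i f(x y z_i) − ∑_{i∈I} c_i f(σ(y) x z_i) = 2 f(x) g(y) for all x, y ∈ S, with f ≠ 0 and g ≠ 0, and suppose ∑_{i∈I} c_i g(z_i) = 0. Then there exists a constant λ₁ ∈ ℂ \ {0} such that ∑_{i∈I} c_i f(x z_i) = λ₁ f(x) for all x ∈ S. -/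
/-!
Write `F x = ∑ᵢ cᵢ f(x zᵢ)` and `G y = ∑ᵢ cᵢ g(y zᵢ)`, so that the equation reads
`F(xy) - F(σ(y) x) = 2 f(x) g(y)`. Convolving it with `μ` in `x`, and separately in `y`, evaluates
`∑ⱼ cⱼ F(x y zⱼ) - ∑ⱼ cⱼ F(σ(y) x zⱼ)` both as `2 F(x) g(y)` and as `2 f(x) G(y)`; the second
evaluation uses `∑ᵢ cᵢ g(zᵢ) = 0`, which says that convolving `F` on the left with `σ(μ)` is the same
as convolving it on the right with `μ`. Hence `F(x) g(y) = f(x) G(y)`, so `F = λ f`, and `λ ≠ 0`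
since `F = 0` would force `f(x) g(y) = 0` everywhere.
-/

open Finset

section DiracConv

variable {S R ι : Type*} [Semigroup S] [CommRing R] [Fintype ι]

/-- `∫ h(xt) dμ(t)` for `μ = ∑ᵢ cᵢ δ_{zᵢ}`. -/
def diracConv (c : ι → R) (z : ι → S) (h : S → R) (x : S) : R :=
  ∑ i, c i * h (x * z i)

def IsVanVleckWilsonSolution (c : ι → R) (z : ι → S) (σ : S → S) (f g : S → R) : Prop :=
  ∀ x y, diracConv c z f (x * y) - diracConv c z f (σ y * x) = 2 * f x * g y

variable (c : ι → R) (z : ι → S) {σ : S → S} {f g : S → R}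

theorem sum_mul_sub_sum_mul_eq_mul_sum {A B b : ι → R} {a : R} (h : ∀ j, A j - B j = a * b j) :
    ∑ j, c j * A j - ∑ j, c j * B j = a * ∑ j, c j * b j := by
  rw [← sum_sub_distrib, mul_sum]
  exact sum_congr rfl fun j _ => by rw [← mul_sub, h]; ring

theorem sum_mul_diracConv_map_mul_eq (hE : IsVanVleckWilsonSolution c z σ f g)
    (hgz : ∑ i, c i * g (z i) = 0) (w : S) :
    ∑ j, c j * diracConv c z f (σ (z j) * w) = diracConv c z (diracConv c z f) w := by
  have key := sum_mul_sub_sum_mul_eq_mul_sum c fun j => hE w (z j)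
  rw [hgz, mul_zero, sub_eq_zero] at key
  exact key.symm

theorem diracConv_diracConv_sub_eq_left (hE : IsVanVleckWilsonSolution c z σ f g)
    (hz : ∀ i x, x * z i = z i * x) (x y : S) :
    diracConv c z (diracConv c z f) (x * y) - diracConv c z (diracConv c z f) (σ y * x) =
      2 * diracConv c z f x * g y := by
  rw [show 2 * diracConv c z f x * g y = 2 * g y * ∑ j, c j * f (x * z j) by rw [diracConv]; ring]
  refine sum_mul_sub_sum_mul_eq_mul_sum c fun j => ?_
  rw [mul_assoc x, hz j y, ← mul_assoc, mul_assoc (σ y), hE]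
  ring

theorem diracConv_diracConv_sub_eq_right (hE : IsVanVleckWilsonSolution c z σ f g)
    (hσmul : ∀ x y, σ (x * y) = σ x * σ y)
    (hz : ∀ i x, x * z i = z i * x) (hgz : ∑ i, c i * g (z i) = 0) (x y : S) :
    diracConv c z (diracConv c z f) (x * y) - diracConv c z (diracConv c z f) (σ y * x) =
      2 * f x * diracConv c z g y := by
  rw [← sum_mul_diracConv_map_mul_eq c z hE hgz (σ y * x)]
  refine sum_mul_sub_sum_mul_eq_mul_sum c fun j => ?_
  -- `σ (zⱼ)` commutes with `σ y` because `zⱼ` commutes with `y`.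
  rw [← mul_assoc, ← hσmul, ← hz j y, mul_assoc]
  exact hE x (y * z j)

theorem diracConv_mul_eq_mul_diracConv [IsDomain R] [NeZero (2 : R)]
    (hE : IsVanVleckWilsonSolution c z σ f g)
    (hσmul : ∀ x y, σ (x * y) = σ x * σ y) (hz : ∀ i x, x * z i = z i * x)
    (hgz : ∑ i, c i * g (z i) = 0) (x y : S) :
    diracConv c z f x * g y = f x * diracConv c z g y := by
  refine mul_left_cancel₀ two_ne_zero ?_
  rw [← mul_assoc, ← mul_assoc, ← diracConv_diracConv_sub_eq_left c z hE hz,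
    diracConv_diracConv_sub_eq_right c z hE hσmul hz hgz]

end DiracConv

theorem exists_eq_const_mul_of_mul_eq_mul {α β K : Type*} [Field K] {F f : α → K} {g G : β → K}
    (h : ∀ x y, F x * g y = f x * G y) (hg : g ≠ 0) : ∃ lam : K, ∀ x, F x = lam * f x := by
  obtain ⟨y₀, hy₀⟩ : ∃ y, g y ≠ 0 := Function.ne_iff.mp hg
  refine ⟨G y₀ / g y₀, fun x => ?_⟩
  rw [div_mul_eq_mul_div, eq_div_iff hy₀, mul_comm (G y₀), h]

theorem van_vleck_wilson_eigen_general {S : Type*} [Semigroup S] (σ : S → S)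
    (hσmul : ∀ x y : S, σ (x * y) = σ x * σ y)
    {ι : Type*} [Fintype ι] (c : ι → ℂ) (z : ι → S)
    (hz : ∀ (i : ι) (x : S), x * z i = z i * x)
    (f g : S → ℂ) (hf : f ≠ 0) (hg : g ≠ 0)
    (heq : ∀ x y : S,
      (∑ i, c i * f (x * y * z i)) - (∑ i, c i * f (σ y * x * z i)) = 2 * f x * g y)
    (hgz : (∑ i, c i * g (z i)) = 0) :
    ∃ lam₁ : ℂ, lam₁ ≠ 0 ∧ ∀ x : S, (∑ i, c i * f (x * z i)) = lam₁ * f x := by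
  obtain ⟨lam, hlam⟩ := exists_eq_const_mul_of_mul_eq_mul
    (diracConv_mul_eq_mul_diracConv c z heq hσmul hz hgz) hg
  refine ⟨lam, ?_, hlam⟩
  rintro rfl
  obtain ⟨x₀, hx₀⟩ : ∃ x, f x ≠ 0 := Function.ne_iff.mp hf
  obtain ⟨y₀, hy₀⟩ : ∃ y, g y ≠ 0 := Function.ne_iff.mp hg
  have h : diracConv c z f (x₀ * y₀) - diracConv c z f (σ y₀ * x₀) = 2 * f x₀ * g y₀ := heq x₀ y₀
  simp [hlam, hx₀, hy₀] at h

/-- Lemma: if `(f, g)` solves the Van Vleck–Wilson equation with `f ≠ 0`, `g ≠ 0`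
and `∑ᵢ cᵢ g(zᵢ) = 0`, then there is a nonzero constant `λ₁` with
`∑ᵢ cᵢ f(x zᵢ) = λ₁ f(x)` for all `x`. -/
theorem van_vleck_wilson_eigen {S : Type*} [Semigroup S] (σ : S → S)
    (hσmul : ∀ x y : S, σ (x * y) = σ x * σ y) (hσinv : ∀ x : S, σ (σ x) = x)
    {ι : Type*} [Fintype ι] (c : ι → ℂ) (z : ι → S)
    (hz : ∀ (i : ι) (x : S), x * z i = z i * x)
    (f g : S → ℂ) (hf : f ≠ 0) (hg : g ≠ 0)
    (heq : ∀ x y : S,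
      (∑ i, c i * f (x * y * z i)) - (∑ i, c i * f (σ y * x * z i)) = 2 * f x * g y)
    (hgz : (∑ i, c i * g (z i)) = 0) :
    ∃ lam₁ : ℂ, lam₁ ≠ 0 ∧ ∀ x : S, (∑ i, c i * f (x * z i)) = lam₁ * f x :=
  van_vleck_wilson_eigen_general σ hσmul c z hz f g hf hg heq hgz
end
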